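/- arXiv:2301.13843 — 5 statements merged into one kernel-verified Lean document; each statement's English description precedes it below -/
import Mathlib

section
/- Let μ be a probability measure on ℝ with finite first moment (the identity function is integrable with respect to μ). Let F(x) = μ((−∞, x]) be its cumulative distribution function and let Q(p) = inf{x ∈ ℝ : p ≤ F(x)} for p ∈ (0,1) be its quantile function. Then for every y ∈ ℝ, the continuous ranked probability score admits the two equivalent expressions ∫_{ℝ} (F(x) − 1_{{y ≤ x}})² dx = 2 ∫_0^1 ρ_p(y − Q(p)) dp, where ρ_p is the pinball loss. -/
open MeasureTheory

/-- The pinball loss at confidence level `p`: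
`ρ_p(z) = p·z` if `z > 0` and `(p−1)·z` if `z ≤ 0`. -/
noncomputable def pinball (p z : ℝ) : ℝ := p * max z 0 + (1 - p) * max (-z) 0

private lemma ofReal_max_zero (z : ℝ) :
    ENNReal.ofReal (max z 0) = ENNReal.ofReal z := by
  rcases le_total z 0 with h | h
  · rw [max_eq_right h, ENNReal.ofReal_zero, ENNReal.ofReal_of_nonpos h]
  · rw [max_eq_left h]

/-- **Two equivalent expressions for the CRPS.**
For a probability measure `μ` on `ℝ` with finite first moment, with CDF
`F x = μ((−∞,x])` and quantile function `Q p = inf {x | p ≤ F x}`, and any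
observation `y`,
`∫ (F x − 1_{y ≤ x})² dx = 2 ∫_0^1 ρ_p (y − Q p) dp`. -/
theorem crps_eq_two_mul_integral_pinball
    (μ : Measure ℝ) [IsProbabilityMeasure μ] (hμ : Integrable id μ)
    (F : ℝ → ℝ) (hF : ∀ x, F x = (μ (Set.Iic x)).toReal)
    (Q : ℝ → ℝ) (hQ : ∀ p ∈ Set.Ioo (0 : ℝ) 1, Q p = sInf {x : ℝ | p ≤ F x})
    (y : ℝ) :
    ∫ x : ℝ, (F x - if y ≤ x then (1 : ℝ) else 0) ^ 2
      = 2 * ∫ p in Set.Ioo (0 : ℝ) 1, pinball p (y - Q p) := by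
  classical
  open Set in
  -- Identify `F` with the CDF of `μ`.
  have hFeq : ∀ x, F x = ProbabilityTheory.cdf μ x := fun x => by
    rw [hF, ProbabilityTheory.cdf_eq_real, measureReal_def]
  have hFm : Monotone F := by
    intro a b hab; rw [hFeq, hFeq]; exact ProbabilityTheory.monotone_cdf μ hab
  have hF0 : ∀ x, 0 ≤ F x := fun x => by rw [hFeq]; exact ProbabilityTheory.cdf_nonneg μ x
  have hF1 : ∀ x, F x ≤ 1 := fun x => by rw [hFeq]; exact ProbabilityTheory.cdf_le_one μ x
  have hFmeas : Measurable F := hFm.measurable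
  have hFtop : Filter.Tendsto F Filter.atTop (nhds 1) := by
    have := ProbabilityTheory.tendsto_cdf_atTop (μ := μ)
    exact this.congr fun x => (hFeq x).symm
  have hFbot : Filter.Tendsto F Filter.atBot (nhds 0) := by
    have := ProbabilityTheory.tendsto_cdf_atBot (μ := μ)
    exact this.congr fun x => (hFeq x).symm
  have hFrc : ∀ a, Filter.Tendsto F (nhdsWithin a (Set.Ioi a)) (nhds (F a)) := by
    intro a
    have h1 : ContinuousWithinAt (ProbabilityTheory.cdf μ) (Set.Ici a) a :=
      (ProbabilityTheory.cdf μ).right_continuous a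
    have h2 : ContinuousWithinAt F (Set.Ici a) a :=
      h1.congr (fun x _ => hFeq x) (hFeq a)
    exact h2.mono_left (nhdsWithin_mono _ Set.Ioi_subset_Ici_self)
  -- The quantile characterization: for `p ∈ (0,1)`, `p ≤ F x ↔ Q p ≤ x`.
  have hQF : ∀ p ∈ Set.Ioo (0 : ℝ) 1, ∀ x, (p ≤ F x ↔ Q p ≤ x) := by
    intro p hp x
    rw [hQ p hp]
    set S := {x : ℝ | p ≤ F x} with hS
    have hne : S.Nonempty := by
      have h := hFtop.eventually (eventually_gt_nhds hp.2)
      obtain ⟨x₀, hx₀⟩ := h.exists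
      exact ⟨x₀, le_of_lt hx₀⟩
    have hbdd : BddBelow S := by
      have h := hFbot.eventually (eventually_lt_nhds hp.1)
      rw [Filter.eventually_atBot] at h
      obtain ⟨x₀, hx₀⟩ := h
      refine ⟨x₀, fun s hs => ?_⟩
      by_contra hlt
      push_neg at hlt
      exact absurd hs (not_le.mpr (hx₀ s hlt.le))
    constructor
    · intro h; exact csInf_le hbdd h
    · intro h
      have hmem : p ≤ F (sInf S) := by
        refine ge_of_tendsto (hFrc (sInf S)) ?_
        filter_upwards [self_mem_nhdsWithin] with z hz
        obtain ⟨s, hsS, hsz⟩ := exists_lt_of_csInf_lt hne hz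
        exact le_trans hsS (hFm hsz.le)
      exact hmem.trans (hFm h)
  -- Notation: `H` is the Heaviside step at `y`, `g` the pointwise integrand.
  set H : ℝ → ℝ := fun x => if y ≤ x then 1 else 0 with hHdef
  have hHcases : ∀ x, H x = 0 ∨ H x = 1 := by
    intro x; by_cases h : y ≤ x <;> simp [hHdef, h]
  have hHmeas : Measurable H := by
    refine Measurable.ite ?_ measurable_const measurable_const
    exact measurableSet_le measurable_const measurable_id
  set g : ℝ → ℝ → ℝ := fun x p => if p ≤ F x then (1 - H x) * p else H x * (1 - p)
    with hgdef
  have hgbound : ∀ x, ∀ p ∈ Set.Icc (0 : ℝ) 1, 0 ≤ g x p ∧ g x p ≤ 1 := by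
    intro x p hp
    rcases hHcases x with h | h <;>
      · simp only [hgdef, h]
        split_ifs <;> constructor <;> nlinarith [hp.1, hp.2]
  have hgmeas : ∀ x, Measurable (fun p => 2 * g x p) := by
    intro x
    refine Measurable.const_mul ?_ 2
    exact Measurable.ite measurableSet_Iic (measurable_id.const_mul _)
      ((measurable_const.sub measurable_id).const_mul _)
  have hgint : ∀ x, IntegrableOn (fun p => 2 * g x p) (Set.Ioc 0 1) := by
    intro x
    refine Integrable.mono' (integrable_const 2) ((hgmeas x).aestronglyMeasurable) ?_
    filter_upwards [ae_restrict_mem measurableSet_Ioc] with p hp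
    have hb := hgbound x p ⟨hp.1.le, hp.2⟩
    rw [Real.norm_eq_abs, abs_of_nonneg (by linarith [hb.1])]
    linarith [hb.2]
  -- Pointwise identity in `x`:
  have lemma2 : ∀ x, ∫ p in Set.Ioo (0 : ℝ) 1, 2 * g x p = (F x - H x) ^ 2 := by
    intro x
    have hu0 := hF0 x
    have hu1 := hF1 x
    rw [← integral_Ioc_eq_integral_Ioo,
      ← Set.Ioc_union_Ioc_eq_Ioc hu0 hu1,
      setIntegral_union (Set.Ioc_disjoint_Ioc_of_le le_rfl) measurableSet_Ioc
        ((hgint x).mono_set (Set.Ioc_subset_Ioc_right hu1))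
        ((hgint x).mono_set (Set.Ioc_subset_Ioc_left hu0))]
    have h1 : ∫ p in Set.Ioc 0 (F x), 2 * g x p = (1 - H x) * (F x) ^ 2 := by
      rw [setIntegral_congr_fun measurableSet_Ioc
        (g := fun p => (2 * (1 - H x)) * p) (fun p hp => by
          simp only [hgdef, if_pos hp.2]; ring)]
      rw [← intervalIntegral.integral_of_le hu0,
        intervalIntegral.integral_const_mul, integral_id]
      ring
    have h2 : ∫ p in Set.Ioc (F x) 1, 2 * g x p = H x * (1 - F x) ^ 2 := by
      rw [setIntegral_congr_fun measurableSet_Ioc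
        (g := fun p => (2 * H x) * (1 - p)) (fun p hp => by
          simp only [hgdef, if_neg (not_le.mpr hp.1)]; ring)]
      rw [← intervalIntegral.integral_of_le hu1,
        intervalIntegral.integral_const_mul,
        intervalIntegral.integral_sub intervalIntegrable_const
          intervalIntegral.intervalIntegrable_id,
        intervalIntegral.integral_const, integral_id]
      simp only [smul_eq_mul]
      ring
    rw [h1, h2]
    rcases hHcases x with h | h <;> rw [h] <;> ring
  -- Per-`p` computation of the inner integral in `x`.
  have lemma4 : ∀ p ∈ Set.Ioo (0 : ℝ) 1,
      (∫⁻ x, ENNReal.ofReal (2 * g x p)) = ENNReal.ofReal (2 * pinball p (y - Q p)) := by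
    intro p hp
    have hiff := hQF p hp
    have hfun : (fun x => ENNReal.ofReal (2 * g x p))
        = fun x => (Set.Ico (Q p) y).indicator (fun _ => ENNReal.ofReal (2 * p)) x
          + (Set.Ico y (Q p)).indicator (fun _ => ENNReal.ofReal (2 * (1 - p))) x := by
      funext x
      have hgx : g x p = if Q p ≤ x then (1 - H x) * p else H x * (1 - p) := by
        simp only [hgdef]
        exact if_congr (hiff x) rfl rfl
      rw [hgx]
      by_cases h1 : Q p ≤ x <;> by_cases h2 : y ≤ x
      · have hx1 : x ∉ Set.Ico (Q p) y := fun h => absurd h.2 (not_lt.mpr h2)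
        have hx2 : x ∉ Set.Ico y (Q p) := fun h => absurd h.2 (not_lt.mpr h1)
        simp [hHdef, h2, hx1, hx2, h1]
      · have hx1 : x ∈ Set.Ico (Q p) y := ⟨h1, not_le.mp h2⟩
        have hx2 : x ∉ Set.Ico y (Q p) := fun h => absurd h.1 h2
        simp [hHdef, h2, hx1, hx2, h1]
      · have hx1 : x ∉ Set.Ico (Q p) y := fun h => absurd h.1 h1
        have hx2 : x ∈ Set.Ico y (Q p) := ⟨h2, not_le.mp h1⟩
        simp [hHdef, h2, hx1, hx2, h1]
      · have hx1 : x ∉ Set.Ico (Q p) y := fun h => absurd h.1 h1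
        have hx2 : x ∉ Set.Ico y (Q p) := fun h => absurd h.1 h2
        simp [hHdef, h2, hx1, hx2, h1]
    rw [hfun, lintegral_add_left (measurable_const.indicator measurableSet_Ico),
      lintegral_indicator_const measurableSet_Ico,
      lintegral_indicator_const measurableSet_Ico,
      Real.volume_Ico, Real.volume_Ico]
    have hpin : 2 * pinball p (y - Q p)
        = (2 * p) * max (y - Q p) 0 + (2 * (1 - p)) * max (Q p - y) 0 := by
      simp only [pinball, neg_sub]; ring
    rw [hpin, ENNReal.ofReal_add
        (mul_nonneg (by linarith [hp.1.le]) (le_max_right _ _))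
        (mul_nonneg (by linarith [hp.2.le]) (le_max_right _ _)),
      ENNReal.ofReal_mul (by linarith [hp.1.le] : (0:ℝ) ≤ 2 * p),
      ENNReal.ofReal_mul (by linarith [hp.2.le] : (0:ℝ) ≤ 2 * (1 - p)),
      ofReal_max_zero, ofReal_max_zero]
  -- Measurability of the uncurried integrand for Tonelli.
  have hunc : Measurable (Function.uncurry fun x p => ENNReal.ofReal (2 * g x p)) := by
    refine ENNReal.measurable_ofReal.comp ?_
    refine Measurable.const_mul ?_ 2
    refine Measurable.ite ?_ ?_ ?_
    · exact measurableSet_le measurable_snd (hFmeas.comp measurable_fst)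
    · exact ((measurable_const.sub (hHmeas.comp measurable_fst)).mul measurable_snd)
    · exact ((hHmeas.comp measurable_fst).mul (measurable_const.sub measurable_snd))
  -- Measurability of the quantile-side integrand.
  set Q1 : ℝ → ℝ := fun p => if p ∈ Set.Ioo (0 : ℝ) 1 then Q p else 0 with hQ1def
  have hQ1meas : Measurable Q1 := by
    refine measurable_of_Iic fun c => ?_
    have : Q1 ⁻¹' Set.Iic c
        = (Set.Ioo (0:ℝ) 1 ∩ Set.Iic (F c)) ∪ ((Set.Ioo (0:ℝ) 1)ᶜ ∩ {p : ℝ | (0:ℝ) ≤ c}) := by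
      ext p
      simp only [Set.mem_preimage, Set.mem_Iic, hQ1def, Set.mem_union, Set.mem_inter_iff,
        Set.mem_compl_iff, Set.mem_setOf_eq]
      by_cases hp : p ∈ Set.Ioo (0:ℝ) 1
      · simp only [if_pos hp]
        rw [← hQF p hp c]
        simp [hp]
      · simp [hp]
    rw [this]
    exact ((measurableSet_Ioo.inter measurableSet_Iic).union
      (measurableSet_Ioo.compl.inter (MeasurableSet.const _)))
  have hpin1meas : Measurable fun p => pinball p (y - Q1 p) := by
    simp only [pinball]
    exact (measurable_id.mul (((measurable_const.sub hQ1meas)).max measurable_const)).add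
      ((measurable_const.sub measurable_id).mul
        ((measurable_neg.comp (measurable_const.sub hQ1meas)).max measurable_const))
  have hpin_aesm : AEStronglyMeasurable (fun p => pinball p (y - Q p))
      (volume.restrict (Set.Ioo (0:ℝ) 1)) := by
    refine (hpin1meas.aestronglyMeasurable).congr ?_
    filter_upwards [ae_restrict_mem measurableSet_Ioo] with p hp
    simp [hQ1def, hp.1, hp.2]
  have hpin_nn : 0 ≤ᵐ[volume.restrict (Set.Ioo (0:ℝ) 1)]
      fun p => pinball p (y - Q p) := by
    filter_upwards [ae_restrict_mem measurableSet_Ioo] with p hp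
    have h1 : (0:ℝ) ≤ max (y - Q p) 0 := le_max_right _ _
    have h2 : (0:ℝ) ≤ max (-(y - Q p)) 0 := le_max_right _ _
    simp only [Pi.zero_apply, pinball]
    have := hp.1.le
    have := hp.2.le
    nlinarith
  -- Convert both sides to lower Lebesgue integrals.
  have hlhs_aesm : AEStronglyMeasurable (fun x : ℝ => (F x - H x) ^ 2) volume :=
    ((hFmeas.sub hHmeas).pow_const 2).aestronglyMeasurable
  have hLHS : (∫ x : ℝ, (F x - if y ≤ x then (1:ℝ) else 0) ^ 2)
      = (∫⁻ x, ENNReal.ofReal ((F x - H x) ^ 2)).toReal := by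
    have : (fun x : ℝ => (F x - if y ≤ x then (1:ℝ) else 0) ^ 2)
        = fun x => (F x - H x) ^ 2 := rfl
    rw [this, integral_eq_lintegral_of_nonneg_ae
      (Filter.Eventually.of_forall fun x => sq_nonneg _) hlhs_aesm]
  have hRHS : (∫ p in Set.Ioo (0:ℝ) 1, pinball p (y - Q p))
      = (∫⁻ p in Set.Ioo (0:ℝ) 1, ENNReal.ofReal (pinball p (y - Q p))).toReal := by
    rw [integral_eq_lintegral_of_nonneg_ae hpin_nn hpin_aesm]
  -- The key chain of equalities for the lower integrals.
  have hkey : (∫⁻ x, ENNReal.ofReal ((F x - H x) ^ 2))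
      = 2 * ∫⁻ p in Set.Ioo (0:ℝ) 1, ENNReal.ofReal (pinball p (y - Q p)) := by
    calc (∫⁻ x, ENNReal.ofReal ((F x - H x) ^ 2))
        = ∫⁻ x, ∫⁻ p in Set.Ioo (0:ℝ) 1, ENNReal.ofReal (2 * g x p) := by
          refine lintegral_congr fun x => ?_
          rw [← lemma2 x]
          refine ofReal_integral_eq_lintegral_ofReal
            ((hgint x).mono_set Set.Ioo_subset_Ioc_self) ?_
          filter_upwards [ae_restrict_mem measurableSet_Ioo] with p hp
          have := (hgbound x p ⟨hp.1.le, hp.2.le⟩).1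
          simp only [Pi.zero_apply]
          linarith
      _ = ∫⁻ p in Set.Ioo (0:ℝ) 1, ∫⁻ x, ENNReal.ofReal (2 * g x p) :=
          lintegral_lintegral_swap hunc.aemeasurable
      _ = ∫⁻ p in Set.Ioo (0:ℝ) 1, ENNReal.ofReal (2 * pinball p (y - Q p)) :=
          setLIntegral_congr_fun measurableSet_Ioo lemma4
      _ = ∫⁻ p in Set.Ioo (0:ℝ) 1, 2 * ENNReal.ofReal (pinball p (y - Q p)) := by
          refine lintegral_congr fun p => ?_
          rw [ENNReal.ofReal_mul (by norm_num : (0:ℝ) ≤ 2)]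
          norm_num
      _ = 2 * ∫⁻ p in Set.Ioo (0:ℝ) 1, ENNReal.ofReal (pinball p (y - Q p)) :=
          lintegral_const_mul' 2 _ (by simp)
  rw [hLHS, hRHS, hkey, ENNReal.toReal_mul]
  norm_num
end

section
/- Let g_1, ..., g_N : (0,1) → ℝ be nondecreasing integrable functions (conditional quantile functions produced by a model at N data points) and let y_1, ..., y_N ∈ ℝ be observed responses. For each n, let F_n(x) = Leb({p ∈ (0,1) : g_n(p) ≤ x}) be the CDF whose quantile function is g_n. Then the calibration objective with uniform weight equals half the total continuous ranked probability score: ∫_0^1 Σ_{n=1}^{N} ρ_p(y_n − g_n(p)) dp = (1/2) Σ_{n=1}^{N} ∫_ℝ (F_n(x) − 1_{{y_n ≤ x}})² dx. Consequently, calibrating the model by minimizing the uniformly weighted integrated pinball loss is equivalent to minimizing the sum of CRPS of the distributional predictions. -/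
open MeasureTheory Set Function

lemma key_section (p q y : ℝ) :
    (fun x => ((if y ≤ x then (1:ℝ) else 0) - p) * ((if y ≤ x then (1:ℝ) else 0) - (if q ≤ x then 1 else 0)))
    = Set.indicator (Set.Ico (min q y) (max q y)) (fun _ => if q ≤ y then p else 1 - p) := by
  funext x
  rcases le_or_gt q y with h3 | h3
  · rw [min_eq_left h3, max_eq_right h3]
    simp only [Set.indicator_apply, Set.mem_Ico, if_pos h3]
    by_cases h1 : y ≤ x <;> by_cases h2 : q ≤ x <;>
      simp [h1, h2] <;> (try split_ifs) <;> first | linarith | ring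
  · rw [min_eq_right h3.le, max_eq_left h3.le]
    simp only [Set.indicator_apply, Set.mem_Ico, if_neg (not_le.mpr h3)]
    by_cases h1 : y ≤ x <;> by_cases h2 : q ≤ x <;>
      simp [h1, h2] <;> (try split_ifs) <;> first | linarith | ring

lemma pinball_eq_integral (p q y : ℝ) :
    pinball p (y - q) = ∫ x : ℝ, ((if y ≤ x then (1:ℝ) else 0) - p) * ((if y ≤ x then (1:ℝ) else 0) - (if q ≤ x then 1 else 0)) := by
  rw [show (fun x => ((if y ≤ x then (1:ℝ) else 0) - p) * ((if y ≤ x then (1:ℝ) else 0) - (if q ≤ x then 1 else 0))) = _ from key_section p q y]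
  rw [integral_indicator measurableSet_Ico]
  rw [setIntegral_const, measureReal_def, Real.volume_Ico, ENNReal.toReal_ofReal (by simp [max_sub_min_eq_abs, abs_nonneg])]
  unfold pinball
  rcases le_or_gt q y with h | h
  · simp [h, max_sub_min_eq_abs, abs_of_nonneg (sub_nonneg.mpr h), max_eq_left (sub_nonpos.mpr h),
      max_eq_right (sub_nonneg.mpr h)]
    ring
  · simp [not_le.mpr h, max_sub_min_eq_abs, abs_of_neg (sub_neg.mpr h),
      max_eq_right (sub_nonpos.mpr h.le), max_eq_left (by linarith : (0:ℝ) ≤ q - y)]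
    ring

lemma section_integrable (p q y : ℝ) :
    Integrable (fun x : ℝ => ((if y ≤ x then (1:ℝ) else 0) - p) * ((if y ≤ x then (1:ℝ) else 0) - (if q ≤ x then 1 else 0))) := by
  rw [key_section p q y]
  rw [integrable_indicator_iff measurableSet_Ico]
  exact (integrableOn_const_iff (C := (if q ≤ y then p else 1 - p))).mpr (Or.inr (by rw [Real.volume_Ico]; exact ENNReal.ofReal_lt_top))

lemma int_Ioo (c b : ℝ) (hb : 0 ≤ b) : ∫ p in Set.Ioo (0:ℝ) b, (c - p) = c * b - b ^ 2 / 2 := by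
  rw [← integral_Ioc_eq_integral_Ioo, ← intervalIntegral.integral_of_le hb,
    intervalIntegral.integral_sub intervalIntegrable_const intervalIntegral.intervalIntegrable_id,
    intervalIntegral.integral_const, integral_id]
  simp; ring

lemma inner_integral (g : ℝ → ℝ) (hg : MonotoneOn g (Set.Ioo 0 1)) (y x : ℝ) :
    ∫ p in Set.Ioo (0:ℝ) 1,
      ((if y ≤ x then (1:ℝ) else 0) - p) * ((if y ≤ x then (1:ℝ) else 0) - (if g p ≤ x then 1 else 0))
    = ((volume {p ∈ Set.Ioo (0:ℝ) 1 | g p ≤ x}).toReal - if y ≤ x then 1 else 0) ^ 2 / 2 := by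
  set c : ℝ := if y ≤ x then 1 else 0 with hc
  have hc2 : c ^ 2 = c := by rw [hc]; split_ifs <;> ring
  set S := {p ∈ Set.Ioo (0:ℝ) 1 | g p ≤ x} with hS
  set a := sSup (insert 0 S) with ha
  have hbdd : BddAbove (insert 0 S) := by
    refine ⟨1, ?_⟩
    rintro t (rfl | ht)
    · exact zero_le_one
    · exact ht.1.2.le
  have h0a : 0 ≤ a := le_csSup hbdd (Set.mem_insert 0 S)
  have ha1 : a ≤ 1 := by
    apply csSup_le (Set.insert_nonempty 0 S)
    rintro t (rfl | ht)
    · exact zero_le_one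
    · exact ht.1.2.le
  have hsub2 : S ⊆ Set.Ioc 0 a := fun s hs => ⟨hs.1.1, le_csSup hbdd (Set.mem_insert_of_mem _ hs)⟩
  have hsub1 : Set.Ioo 0 a ⊆ S := by
    intro p hp
    obtain ⟨s, hs, hps⟩ := exists_lt_of_lt_csSup (Set.insert_nonempty 0 S) hp.2
    rcases hs with rfl | hs
    · exact absurd hp.1 (not_lt.mpr hps.le)
    · have hpIoo : p ∈ Set.Ioo (0:ℝ) 1 := ⟨hp.1, hps.trans hs.1.2⟩
      exact ⟨hpIoo, le_trans (hg hpIoo hs.1 hps.le) hs.2⟩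
  have hvol : volume S = ENNReal.ofReal a := by
    apply le_antisymm
    · calc volume S ≤ volume (Set.Ioc 0 a) := measure_mono hsub2
        _ = ENNReal.ofReal a := by rw [Real.volume_Ioc, sub_zero]
    · calc ENNReal.ofReal a = volume (Set.Ioo 0 a) := by rw [Real.volume_Ioo, sub_zero]
        _ ≤ volume S := measure_mono hsub1
  rw [hvol, ENNReal.toReal_ofReal h0a]
  have hcongr : ∀ᵐ p ∂(volume.restrict (Set.Ioo (0:ℝ) 1)),
      (c - p) * (c - if g p ≤ x then 1 else 0) = (c - p) * (c - if p < a then 1 else 0) := by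
    have h1 : ∀ᵐ p ∂(volume : Measure ℝ), p ≠ a := by
      rw [ae_iff]
      simp only [ne_eq, not_not, Set.setOf_eq_eq_singleton]
      exact measure_singleton a
    refine (ae_restrict_iff' measurableSet_Ioo).mpr ?_
    filter_upwards [h1] with p hpa hp
    congr 2
    rcases lt_or_gt_of_ne hpa with h | h
    · rw [if_pos (hsub1 ⟨hp.1, h⟩).2, if_pos h]
    · rw [if_neg (fun hgx => absurd (hsub2 ⟨hp, hgx⟩).2 (not_le.mpr h)),
        if_neg (not_lt.mpr h.le)]
  rw [integral_congr_ae hcongr]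
  have hfun : (fun p => (c - p) * (c - if p < a then 1 else 0))
      = fun p => c * (c - p) - Set.indicator (Set.Iio a) (fun p => c - p) p := by
    funext p
    by_cases h : p < a <;> simp [Set.indicator_apply, Set.mem_Iio, h] <;> ring
  rw [hfun]
  have hcont : Continuous fun p : ℝ => c - p := by continuity
  have hint0 : IntegrableOn (fun p : ℝ => c - p) (Set.Ioo 0 1) :=
    (hcont.integrableOn_Icc).mono_set Set.Ioo_subset_Icc_self
  have hint1 : IntegrableOn (fun p : ℝ => c * (c - p)) (Set.Ioo 0 1) := by
    exact hint0.const_mul c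
  have hint2 : IntegrableOn (fun p : ℝ => Set.indicator (Set.Iio a) (fun p => c - p) p)
      (Set.Ioo 0 1) := hint0.indicator measurableSet_Iio
  rw [integral_sub hint1 hint2, integral_const_mul, setIntegral_indicator measurableSet_Iio]
  have hinter : Set.Ioo (0:ℝ) 1 ∩ Set.Iio a = Set.Ioo 0 a := by
    ext t
    simp only [Set.mem_inter_iff, Set.mem_Ioo, Set.mem_Iio]
    constructor
    · rintro ⟨⟨h1, _⟩, h2⟩; exact ⟨h1, h2⟩
    · rintro ⟨h1, h2⟩; exact ⟨⟨h1, lt_of_lt_of_le h2 ha1⟩, h2⟩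
  rw [hinter, int_Ioo c 1 zero_le_one, int_Ioo c a h0a]
  linear_combination hc2 / 2

lemma main_one (g : ℝ → ℝ) (y : ℝ)
    (hmono : MonotoneOn g (Set.Ioo 0 1)) (hgint : IntegrableOn g (Set.Ioo 0 1))
    (F : ℝ → ℝ) (hF : ∀ x, F x = (volume {p ∈ Set.Ioo (0:ℝ) 1 | g p ≤ x}).toReal) :
    Integrable (fun p => pinball p (y - g p)) (volume.restrict (Set.Ioo 0 1)) ∧
    ∫ p in Set.Ioo (0:ℝ) 1, pinball p (y - g p)
      = (1/2) * ∫ x : ℝ, (F x - if y ≤ x then (1:ℝ) else 0) ^ 2 := by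
  set μ := volume.restrict (Set.Ioo (0:ℝ) 1) with hμ
  set H : ℝ → ℝ → ℝ := fun p x =>
    ((if y ≤ x then (1:ℝ) else 0) - p) * ((if y ≤ x then (1:ℝ) else 0) - (if g p ≤ x then 1 else 0)) with hH
  have hgm : AEStronglyMeasurable g μ := hgint.1
  set g' : ℝ → ℝ := hgm.mk g with hg'
  have hg'm : StronglyMeasurable g' := hgm.stronglyMeasurable_mk
  have hae : g =ᵐ[μ] g' := hgm.ae_eq_mk
  have hnull : ∀ᵐ (q : ℝ × ℝ) ∂(μ.prod (volume : Measure ℝ)), g q.1 = g' q.1 := by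
    rw [Filter.EventuallyEq, ae_iff] at hae
    rw [ae_iff]
    have hsub : {q : ℝ × ℝ | ¬ g q.1 = g' q.1}
        ⊆ (toMeasurable μ {p | ¬ g p = g' p}) ×ˢ (Set.univ : Set ℝ) :=
      fun q hq => ⟨subset_toMeasurable _ _ hq, Set.mem_univ _⟩
    refine measure_mono_null hsub ?_
    rw [Measure.prod_prod, measure_toMeasurable, hae, zero_mul]
  have hmeas' : Measurable (uncurry fun p x =>
      ((if y ≤ x then (1:ℝ) else 0) - p) * ((if y ≤ x then (1:ℝ) else 0) - (if g' p ≤ x then 1 else 0))) := by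
    have m1 : Measurable fun q : ℝ × ℝ => if y ≤ q.2 then (1:ℝ) else 0 :=
      Measurable.ite (measurableSet_le measurable_const measurable_snd) measurable_const measurable_const
    have m2 : Measurable fun q : ℝ × ℝ => if g' q.1 ≤ q.2 then (1:ℝ) else 0 :=
      Measurable.ite (measurableSet_le (hg'm.measurable.comp measurable_fst) measurable_snd)
        measurable_const measurable_const
    exact (m1.sub measurable_fst).mul (m1.sub m2)
  have hASM : AEStronglyMeasurable (uncurry H) (μ.prod volume) := by
    refine (hmeas'.aestronglyMeasurable).congr ?_
    filter_upwards [hnull] with q hq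
    simp only [uncurry, hH, hq]
  have hIntProd : Integrable (uncurry H) (μ.prod volume) := by
    rw [integrable_prod_iff hASM]
    constructor
    · exact Filter.Eventually.of_forall fun p => section_integrable p (g p) y
    · refine Integrable.mono' (((integrable_const y).sub hgint).abs) hASM.norm.integral_prod_right' ?_
      have hIoo : ∀ᵐ p ∂μ, p ∈ Set.Ioo (0:ℝ) 1 := ae_restrict_mem measurableSet_Ioo
      filter_upwards [hIoo] with p hp
      have h2 : H p = Set.indicator (Set.Ico (min (g p) y) (max (g p) y))
          (fun _ => if g p ≤ y then p else 1 - p) := key_section p (g p) y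
      have h3 : (fun x => ‖uncurry H (p, x)‖)
          = Set.indicator (Set.Ico (min (g p) y) (max (g p) y))
            (fun _ => ‖if g p ≤ y then p else 1 - p‖) := by
        funext x
        rw [show uncurry H (p, x) = H p x from rfl, h2, norm_indicator_eq_indicator_norm]
      rw [h3, integral_indicator_const _ measurableSet_Ico, measureReal_def, Real.volume_Ico, smul_eq_mul]
      have hv : ‖if g p ≤ y then p else 1 - p‖ ≤ 1 := by
        rcases hp with ⟨hp0, hp1⟩
        split_ifs <;> rw [Real.norm_eq_abs, abs_of_nonneg (by linarith)] <;> linarith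
      have hmm : max (g p) y - min (g p) y = |y - g p| := by
        rw [max_sub_min_eq_abs', abs_sub_comm]
      rw [ENNReal.toReal_ofReal (by rw [hmm]; positivity), hmm, Real.norm_eq_abs]
      rw [abs_of_nonneg (by positivity)]
      calc |y - g p| * ‖if g p ≤ y then p else 1 - p‖ ≤ |y - g p| * 1 :=
            mul_le_mul_of_nonneg_left hv (abs_nonneg _)
        _ = |y - g p| := mul_one _
  have hIntPin : Integrable (fun p => pinball p (y - g p)) μ := by
    refine (hIntProd.integral_prod_left).congr ?_
    exact Filter.Eventually.of_forall fun p => (pinball_eq_integral p (g p) y).symm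
  refine ⟨hIntPin, ?_⟩
  calc ∫ p in Set.Ioo (0:ℝ) 1, pinball p (y - g p)
      = ∫ p, (∫ x, H p x) ∂μ := by
        exact integral_congr_ae (Filter.Eventually.of_forall fun p => pinball_eq_integral p (g p) y)
    _ = ∫ x, ∫ p, H p x ∂μ := integral_integral_swap hIntProd
    _ = ∫ x, (F x - if y ≤ x then (1:ℝ) else 0) ^ 2 / 2 := by
        refine integral_congr_ae (Filter.Eventually.of_forall fun x => ?_)
        show (∫ p, H p x ∂μ) = (F x - if y ≤ x then (1:ℝ) else 0) ^ 2 / 2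
        rw [hF x]
        exact inner_integral g hmono y x
    _ = (1/2) * ∫ x : ℝ, (F x - if y ≤ x then (1:ℝ) else 0) ^ 2 := by
        rw [integral_div]; ring

/-- **Equivalence of the uniformly weighted calibration objective and CRPS minimization.**
For nondecreasing integrable conditional quantile functions `g n : (0,1) → ℝ` and
observations `y n`, with `F n` the CDF whose quantile function is `g n`
(`F n x = Leb {p ∈ (0,1) | g n p ≤ x}`), the integrated pinball objective equals
half the total CRPS:
`∫_0^1 ∑ₙ ρ_p (yₙ − gₙ(p)) dp = (1/2) ∑ₙ ∫_ℝ (Fₙ(x) − 1_{yₙ ≤ x})² dx`. -/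
theorem integrated_pinball_eq_half_total_crps
    (N : ℕ) (g : Fin N → ℝ → ℝ) (y : Fin N → ℝ)
    (hmono : ∀ n, MonotoneOn (g n) (Set.Ioo (0 : ℝ) 1))
    (hint : ∀ n, IntegrableOn (g n) (Set.Ioo (0 : ℝ) 1))
    (F : Fin N → ℝ → ℝ)
    (hF : ∀ n x, F n x = (volume {p ∈ Set.Ioo (0 : ℝ) 1 | g n p ≤ x}).toReal) :
    ∫ p in Set.Ioo (0 : ℝ) 1, ∑ n : Fin N, pinball p (y n - g n p)
      = (1 / 2) * ∑ n : Fin N,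
          ∫ x : ℝ, (F n x - if y n ≤ x then (1 : ℝ) else 0) ^ 2 := by
  have h := fun n => main_one (g n) (y n) (hmono n) (hint n) (F n) (hF n)
  rw [integral_finset_sum _ (fun n _ => (h n).1), Finset.mul_sum]
  exact Finset.sum_congr rfl fun n _ => (h n).2
end

section
/- Let μ be a probability measure on ℝ with finite first moment, F(x) = μ((−∞,x]) its CDF, and p ∈ (0,1). Let q = Q(p) = inf{x ∈ ℝ : p ≤ F(x)} be the p-quantile of μ. Then q minimizes the expected pinball loss: for every C ∈ ℝ, ∫_ℝ ρ_p(z − q) dμ(z) ≤ ∫_ℝ ρ_p(z − C) dμ(z). That is, the statistic associated with the (scaled) Koenker–Bassett error at level p is the p-quantile. -/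
open MeasureTheory

lemma pinball_bounds {p : ℝ} (w : ℝ) (hp0 : 0 ≤ p) (hp1 : p ≤ 1) :
    0 ≤ pinball p w ∧ pinball p w ≤ |w| := by
  unfold pinball
  rcases le_total w 0 with h | h
  · rw [max_eq_right h, max_eq_left (by linarith), abs_of_nonpos h]
    constructor <;> nlinarith
  · rw [max_eq_left h, max_eq_right (by linarith), abs_of_nonneg h]
    constructor <;> nlinarith

lemma pinball_pt_right {p : ℝ} (q C z : ℝ) (hp0 : 0 ≤ p) (hp1 : p ≤ 1) (h : q ≤ C) :
    (C - q) * ((Set.Iic q).indicator (fun _ => (1:ℝ)) z - p)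
      ≤ pinball p (z - C) - pinball p (z - q) := by
  unfold pinball
  rcases le_or_gt z q with hz | hz
  · rw [Set.indicator_of_mem (show z ∈ Set.Iic q from hz)]
    rw [max_eq_right (by linarith : z - C ≤ 0), max_eq_left (by linarith : (0:ℝ) ≤ -(z - C)),
      max_eq_right (by linarith : z - q ≤ 0), max_eq_left (by linarith : (0:ℝ) ≤ -(z - q))]
    nlinarith
  · rw [Set.indicator_of_notMem (by simpa using hz)]
    rw [max_eq_left (by linarith : 0 ≤ z - q), max_eq_right (by linarith : -(z - q) ≤ 0)]
    nlinarith [mul_le_mul_of_nonneg_left (le_max_left (z - C) 0) hp0,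
      mul_nonneg (by linarith : (0:ℝ) ≤ 1 - p) (le_max_right (-(z - C)) 0)]

lemma pinball_pt_left {p : ℝ} (q C z : ℝ) (hp0 : 0 ≤ p) (hp1 : p ≤ 1) (h : C ≤ q) :
    (q - C) * (p - (Set.Iio q).indicator (fun _ => (1:ℝ)) z)
      ≤ pinball p (z - C) - pinball p (z - q) := by
  unfold pinball
  rcases lt_or_ge z q with hz | hz
  · rw [Set.indicator_of_mem (show z ∈ Set.Iio q from hz)]
    rw [max_eq_right (by linarith : z - q ≤ 0), max_eq_left (by linarith : (0:ℝ) ≤ -(z - q))]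
    nlinarith [mul_nonneg hp0 (le_max_right (z - C) 0),
      mul_le_mul_of_nonneg_left (le_max_left (-(z - C)) 0) (by linarith : (0:ℝ) ≤ 1 - p)]
  · rw [Set.indicator_of_notMem (by simpa using hz)]
    rw [max_eq_left (by linarith : 0 ≤ z - q), max_eq_right (by linarith : -(z - q) ≤ 0),
      max_eq_left (by linarith : 0 ≤ z - C), max_eq_right (by linarith : -(z - C) ≤ 0)]
    nlinarith

/-- **The quantile minimizes the expected pinball loss.**
Let `μ` be a probability measure on `ℝ` with finite first moment, `F` its CDF and
`q = Q(p) = inf {x | p ≤ F x}` its `p`-quantile, `p ∈ (0,1)`. Then for every `C ∈ ℝ`,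
`∫ ρ_p(z − q) dμ(z) ≤ ∫ ρ_p(z − C) dμ(z)`: the statistic associated with the
(scaled) Koenker–Bassett error at level `p` is the `p`-quantile. -/
theorem quantile_minimizes_expected_pinball
    (μ : Measure ℝ) [IsProbabilityMeasure μ] (hμ : Integrable id μ)
    (p : ℝ) (hp : p ∈ Set.Ioo (0 : ℝ) 1)
    (F : ℝ → ℝ) (hF : ∀ x, F x = (μ (Set.Iic x)).toReal)
    (q : ℝ) (hq : q = sInf {x : ℝ | p ≤ F x}) :
    ∀ C : ℝ, ∫ z, pinball p (z - q) ∂μ ≤ ∫ z, pinball p (z - C) ∂μ := by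
  obtain ⟨hp0, hp1⟩ := hp
  have hFe : ∀ x, F x = ProbabilityTheory.cdf μ x := fun x => by
    rw [hF, ProbabilityTheory.cdf_eq_real, measureReal_def]
  have hmono : Monotone F := by
    intro a b hab
    rw [hFe a, hFe b]
    exact ProbabilityTheory.monotone_cdf μ hab
  -- nonempty
  have hne : Set.Nonempty {x : ℝ | p ≤ F x} := by
    obtain ⟨x, hx⟩ :=
      ((ProbabilityTheory.tendsto_cdf_atTop (μ := μ)).eventually (eventually_gt_nhds hp1)).exists
    exact ⟨x, by rw [Set.mem_setOf_eq, hFe]; exact hx.le⟩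
  -- bounded below
  have hbdd : BddBelow {x : ℝ | p ≤ F x} := by
    obtain ⟨x0, hx0⟩ :=
      ((ProbabilityTheory.tendsto_cdf_atBot (μ := μ)).eventually (eventually_lt_nhds hp0)).exists
    refine ⟨x0, fun y hy => ?_⟩
    by_contra h
    push_neg at h
    have : F y ≤ F x0 := hmono h.le
    rw [hFe x0] at *
    rw [Set.mem_setOf_eq] at hy
    linarith
  -- p ≤ F q
  have hFq : p ≤ F q := by
    have hcont : ContinuousWithinAt F (Set.Ici q) q := by
      have : F = fun x => ProbabilityTheory.cdf μ x := funext hFe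
      rw [this]
      exact (ProbabilityTheory.cdf μ).right_continuous q
    have htend : Filter.Tendsto F (nhdsWithin q (Set.Ioi q)) (nhds (F q)) :=
      hcont.tendsto.mono_left (nhdsWithin_mono q Set.Ioi_subset_Ici_self)
    refine ge_of_tendsto htend ?_
    filter_upwards [self_mem_nhdsWithin] with x hx
    have hqx : sInf {x : ℝ | p ≤ F x} < x := hq ▸ hx
    obtain ⟨y, hy, hyx⟩ := (csInf_lt_iff hbdd hne).1 hqx
    exact le_trans hy (hmono hyx.le)
  -- F x < p for x < q
  have hlow : ∀ x, x < q → F x < p := by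
    intro x hx
    by_contra h
    push_neg at h
    have : q ≤ x := hq ▸ csInf_le hbdd h
    linarith
  -- μ (Iio q) ≤ p
  have hIio : (μ (Set.Iio q)).toReal ≤ p := by
    have hU : Set.Iio q = ⋃ n : ℕ, Set.Iic (q - 1/(n+1)) := by
      ext x
      simp only [Set.mem_Iio, Set.mem_iUnion, Set.mem_Iic]
      constructor
      · intro hx
        obtain ⟨n, hn⟩ := exists_nat_one_div_lt (sub_pos.2 hx)
        exact ⟨n, by linarith⟩
      · rintro ⟨n, hn⟩
        have : (0:ℝ) < 1/(n+1) := by positivity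
        linarith
    have hkey : μ (Set.Iio q) ≤ ENNReal.ofReal p := by
      rw [hU]
      have hmon : Monotone (fun n : ℕ => Set.Iic (q - 1/(n+1) : ℝ)) := by
        intro n m hnm
        apply Set.Iic_subset_Iic.2
        have h1 : (1:ℝ)/(m+1) ≤ 1/(n+1) := by
          apply one_div_le_one_div_of_le (by positivity)
          exact_mod_cast by omega
        linarith
      rw [hmon.measure_iUnion]
      refine iSup_le fun n => ?_
      have hlt : F (q - 1/(n+1)) < p := hlow _ (by
        have : (0:ℝ) < 1/(n+1) := by positivity
        linarith)
      rw [hF] at hlt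
      exact (ENNReal.le_ofReal_iff_toReal_le (measure_ne_top _ _) hp0.le).2 hlt.le
    exact ENNReal.toReal_le_of_le_ofReal hp0.le hkey
  -- integrability of pinball losses
  have hint : ∀ C : ℝ, Integrable (fun z => pinball p (z - C)) μ := by
    intro C
    have hb : Integrable (fun z : ℝ => |z| + |C|) μ := hμ.abs.add (integrable_const _)
    refine hb.mono' ?_ ?_
    · apply Continuous.aestronglyMeasurable
      unfold pinball
      fun_prop
    · filter_upwards with z
      obtain ⟨h1, h2⟩ := pinball_bounds (z - C) hp0.le hp1.le
      have h3 : |z - C| ≤ |z| + |C| := abs_sub z C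
      rw [Real.norm_eq_abs, abs_of_nonneg h1]
      linarith
  intro C
  rcases le_total q C with hqC | hqC
  · -- case q ≤ C : use indicator of Iic q
    have hind : Integrable ((Set.Iic q).indicator (fun _ => (1:ℝ))) μ :=
      (integrable_const (1:ℝ)).indicator measurableSet_Iic
    set g : ℝ → ℝ := fun z => (C - q) * ((Set.Iic q).indicator (fun _ => (1:ℝ)) z - p) with hgdef
    have hgint : Integrable g μ := (hind.sub (integrable_const p)).const_mul _
    have hmono_int : ∫ z, g z ∂μ ≤ ∫ z, (pinball p (z - C) - pinball p (z - q)) ∂μ :=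
      integral_mono hgint ((hint C).sub (hint q))
        (fun z => pinball_pt_right q C z hp0.le hp1.le hqC)
    rw [integral_sub (hint C) (hint q)] at hmono_int
    have hgval : ∫ z, g z ∂μ = (C - q) * ((μ (Set.Iic q)).toReal - p) := by
      rw [hgdef]
      rw [integral_const_mul, integral_sub hind (integrable_const p),
        integral_indicator_const (1:ℝ) measurableSet_Iic, integral_const]
      simp [measure_univ, measureReal_def]
    have hnn : 0 ≤ ∫ z, g z ∂μ := by
      rw [hgval]
      apply mul_nonneg (by linarith)
      rw [← hF]
      linarith
    linarith
  · -- case C ≤ q : use indicator of Iio q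
    have hind : Integrable ((Set.Iio q).indicator (fun _ => (1:ℝ))) μ :=
      (integrable_const (1:ℝ)).indicator measurableSet_Iio
    set g : ℝ → ℝ := fun z => (q - C) * (p - (Set.Iio q).indicator (fun _ => (1:ℝ)) z) with hgdef
    have hgint : Integrable g μ := ((integrable_const p).sub hind).const_mul _
    have hmono_int : ∫ z, g z ∂μ ≤ ∫ z, (pinball p (z - C) - pinball p (z - q)) ∂μ :=
      integral_mono hgint ((hint C).sub (hint q))
        (fun z => pinball_pt_left q C z hp0.le hp1.le hqC)
    rw [integral_sub (hint C) (hint q)] at hmono_int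
    have hgval : ∫ z, g z ∂μ = (q - C) * (p - (μ (Set.Iio q)).toReal) := by
      rw [hgdef]
      rw [integral_const_mul, integral_sub (integrable_const p) hind,
        integral_indicator_const (1:ℝ) measurableSet_Iio, integral_const]
      simp [measure_univ, measureReal_def]
    have hnn : 0 ≤ ∫ z, g z ∂μ := by
      rw [hgval]
      apply mul_nonneg (by linarith)
      linarith
    linarith
end

section
/- Let Φ be the CDF of the standard normal distribution on ℝ and let Q_N(p) = inf{x ∈ ℝ : p ≤ Φ(x)} be its quantile function. Then for every p ∈ (0,1), ∫_p^1 Q_N(u) du = f_N(Q_N(p)), where f_N(t) = exp(−t²/2)/√(2π) is the standard normal density. Equivalently, the p-CVaR of the standard normal distribution equals f_N(Q_N(p))/(1−p). -/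
open MeasureTheory

/-- The standard normal density `f_N(t) = exp(−t²/2)/√(2π)`. -/
noncomputable def stdNormalPDF (t : ℝ) : ℝ :=
  Real.exp (-t ^ 2 / 2) / Real.sqrt (2 * Real.pi)

/-- The standard normal CDF `Φ(x) = ∫_{−∞}^x f_N(t) dt`. -/
noncomputable def stdNormalCDF (x : ℝ) : ℝ :=
  ∫ t in Set.Iic x, stdNormalPDF t

/-- The standard normal quantile function `Q_N(p) = inf {x | p ≤ Φ(x)}`. -/
noncomputable def stdNormalQuantile (p : ℝ) : ℝ :=
  sInf {x : ℝ | p ≤ stdNormalCDF x}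

open Set Filter Topology

section Aux

lemma pdf_eq (t : ℝ) : stdNormalPDF t = Real.exp (-(2⁻¹) * t ^ 2) / Real.sqrt (2 * Real.pi) := by
  unfold stdNormalPDF; ring_nf

lemma sqrt_two_pi_pos : 0 < Real.sqrt (2 * Real.pi) :=
  Real.sqrt_pos.2 (by positivity)

lemma pdf_pos (t : ℝ) : 0 < stdNormalPDF t :=
  div_pos (Real.exp_pos _) sqrt_two_pi_pos

lemma pdf_continuous : Continuous stdNormalPDF := by
  unfold stdNormalPDF
  exact (Real.continuous_exp.comp (by continuity)).div_const _

lemma pdf_integrable : Integrable stdNormalPDF := by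
  have h := (integrable_exp_neg_mul_sq (by norm_num : (0:ℝ) < 2⁻¹)).div_const
    (Real.sqrt (2 * Real.pi))
  exact h.congr (Eventually.of_forall fun t => (pdf_eq t).symm)

lemma integral_pdf : ∫ t, stdNormalPDF t = 1 := by
  simp_rw [pdf_eq, div_eq_mul_inv]
  rw [integral_mul_const, integral_gaussian]
  have h : Real.pi / 2⁻¹ = 2 * Real.pi := by ring
  rw [h, mul_inv_cancel₀ (ne_of_gt sqrt_two_pi_pos)]

lemma cdf_sub (a b : ℝ) :
    stdNormalCDF b - stdNormalCDF a = ∫ t in a..b, stdNormalPDF t :=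
  intervalIntegral.integral_Iic_sub_Iic pdf_integrable.integrableOn pdf_integrable.integrableOn

lemma cdf_hasDerivAt (x : ℝ) : HasDerivAt stdNormalCDF (stdNormalPDF x) x := by
  have h : (fun y => stdNormalCDF 0 + ∫ t in (0:ℝ)..y, stdNormalPDF t) = stdNormalCDF := by
    funext y
    rw [← cdf_sub 0 y]; ring
  have hd := ((pdf_continuous.integral_hasStrictDerivAt 0 x).hasDerivAt).const_add
    (stdNormalCDF 0)
  exact h ▸ hd

lemma cdf_strictMono : StrictMono stdNormalCDF := by
  intro a b hab
  have hpos := intervalIntegral.intervalIntegral_pos_of_pos (f := stdNormalPDF)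
    (pdf_continuous.intervalIntegrable a b) pdf_pos hab
  have := cdf_sub a b
  linarith

lemma cdf_pos (x : ℝ) : 0 < stdNormalCDF x := by
  have h1 : (0:ℝ) ≤ stdNormalCDF (x - 1) :=
    setIntegral_nonneg measurableSet_Iic fun t _ => (pdf_pos t).le
  have h2 := cdf_strictMono (show x - 1 < x by linarith)
  linarith

lemma cdf_lt_one (x : ℝ) : stdNormalCDF x < 1 := by
  have key : stdNormalCDF x + ∫ t in Ioi x, stdNormalPDF t = 1 := by
    rw [← integral_pdf]
    exact intervalIntegral.integral_Iic_add_Ioi pdf_integrable.integrableOn pdf_integrable.integrableOn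
  have hpos : (0:ℝ) < ∫ t in x..(x+1), stdNormalPDF t :=
    intervalIntegral.intervalIntegral_pos_of_pos (pdf_continuous.intervalIntegrable _ _) pdf_pos (by linarith)
  have hsub : (∫ t in x..(x+1), stdNormalPDF t) ≤ ∫ t in Ioi x, stdNormalPDF t := by
    rw [intervalIntegral.integral_of_le (by linarith : x ≤ x + 1)]
    exact setIntegral_mono_set pdf_integrable.integrableOn
      (Eventually.of_forall fun t => (pdf_pos t).le)
      (HasSubset.Subset.eventuallyLE Ioc_subset_Ioi_self)
  linarith

lemma cdf_mem_Ioo (x : ℝ) : stdNormalCDF x ∈ Ioo (0:ℝ) 1 := ⟨cdf_pos x, cdf_lt_one x⟩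

lemma cdf_tendsto_atTop : Tendsto stdNormalCDF atTop (𝓝 1) := by
  have h := (aecover_Iic (tendsto_id (α := ℝ))).integral_tendsto_of_countably_generated
    pdf_integrable
  rwa [integral_pdf] at h

lemma cdf_tendsto_atBot : Tendsto stdNormalCDF atBot (𝓝 0) := by
  have h := (aecover_Ioi (tendsto_id (α := ℝ))).integral_tendsto_of_countably_generated
    pdf_integrable
  rw [integral_pdf] at h
  have h2 : Tendsto (fun x : ℝ => 1 - ∫ t in Ioi x, stdNormalPDF t) atBot (𝓝 (1 - 1)) :=
    tendsto_const_nhds.sub h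
  norm_num at h2
  refine h2.congr fun x => ?_
  have := intervalIntegral.integral_Iic_add_Ioi (b := x) pdf_integrable.integrableOn pdf_integrable.integrableOn
  rw [integral_pdf] at this
  show 1 - _ = stdNormalCDF x
  unfold stdNormalCDF
  linarith

lemma cdf_surj {p : ℝ} (hp : p ∈ Ioo (0:ℝ) 1) : ∃ x, stdNormalCDF x = p := by
  obtain ⟨a, ha⟩ := (cdf_tendsto_atBot.eventually_lt_const hp.1).exists
  obtain ⟨b, hb⟩ := (cdf_tendsto_atTop.eventually_const_lt hp.2).exists
  have hab : a ≤ b := (cdf_strictMono.lt_iff_lt.mp (ha.trans hb)).le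
  obtain ⟨x, _, hx⟩ := intermediate_value_Icc hab
    (fun y _ => (cdf_hasDerivAt y).continuousAt.continuousWithinAt) ⟨ha.le, hb.le⟩
  exact ⟨x, hx⟩

lemma quantile_eq {p x₀ : ℝ} (h : stdNormalCDF x₀ = p) : stdNormalQuantile p = x₀ := by
  have hset : {x : ℝ | p ≤ stdNormalCDF x} = Ici x₀ := by
    ext y
    simp only [mem_setOf_eq, mem_Ici, ← h, cdf_strictMono.le_iff_le]
  rw [stdNormalQuantile, hset, csInf_Ici]

lemma cdf_quantile {p : ℝ} (hp : p ∈ Ioo (0:ℝ) 1) :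
    stdNormalCDF (stdNormalQuantile p) = p := by
  obtain ⟨x, hx⟩ := cdf_surj hp
  rw [quantile_eq hx, hx]

lemma quantile_cdf (x : ℝ) : stdNormalQuantile (stdNormalCDF x) = x :=
  quantile_eq rfl

lemma quantile_monotoneOn : MonotoneOn stdNormalQuantile (Ioo (0:ℝ) 1) := by
  intro a ha b hb hab
  have h1 := cdf_quantile ha
  have h2 := cdf_quantile hb
  exact cdf_strictMono.le_iff_le.mp (by rw [h1, h2]; exact hab)

lemma quantile_continuousOn : ContinuousOn stdNormalQuantile (Ioo (0:ℝ) 1) := by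
  intro p hp
  refine (continuousAt_of_monotoneOn_of_exists_between quantile_monotoneOn
    (isOpen_Ioo.mem_nhds hp) ?_ ?_).continuousWithinAt
  · intro b hb
    obtain ⟨x, hx1, hx2⟩ := exists_between hb
    exact ⟨stdNormalCDF x, cdf_mem_Ioo x, by rw [quantile_cdf]; exact ⟨hx1, hx2⟩⟩
  · intro b hb
    obtain ⟨x, hx1, hx2⟩ := exists_between hb
    exact ⟨stdNormalCDF x, cdf_mem_Ioo x, by rw [quantile_cdf]; exact ⟨hx1, hx2⟩⟩

lemma integral_comp_cdf (g : ℝ → ℝ) (hg : ContinuousOn g (Ioo (0:ℝ) 1)) (a b : ℝ) :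
    ∫ x in a..b, stdNormalPDF x * g (stdNormalCDF x)
      = ∫ u in stdNormalCDF a..stdNormalCDF b, g u := by
  have h := intervalIntegral.integral_comp_smul_deriv' (f := stdNormalCDF)
    (f' := stdNormalPDF) (g := g) (a := a) (b := b)
    (fun x _ => cdf_hasDerivAt x) pdf_continuous.continuousOn
    (hg.mono (by rintro u ⟨x, -, rfl⟩; exact cdf_mem_Ioo x))
  simpa [smul_eq_mul] using h

lemma integrable_mul_pdf : Integrable (fun x : ℝ => x * stdNormalPDF x) := by
  have h := (integrable_mul_exp_neg_mul_sq (by norm_num : (0:ℝ) < 2⁻¹)).div_const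
    (Real.sqrt (2 * Real.pi))
  refine h.congr (Eventually.of_forall fun t => ?_)
  simp only [pdf_eq]; ring

end Aux

/-- **CVaR of the standard normal distribution.**
For every `p ∈ (0,1)`, `∫_p^1 Q_N(u) du = f_N(Q_N(p))`; equivalently, the `p`-CVaR
of the standard normal distribution equals `f_N(Q_N(p))/(1−p)`. -/
theorem cvar_standard_normal (p : ℝ) (hp : p ∈ Set.Ioo (0 : ℝ) 1) :
    (∫ u in p..1, stdNormalQuantile u) = stdNormalPDF (stdNormalQuantile p) ∧
    (1 / (1 - p)) * ∫ u in p..1, stdNormalQuantile u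
      = stdNormalPDF (stdNormalQuantile p) / (1 - p) := by
  obtain ⟨hp0, hp1⟩ := hp
  set x₀ := stdNormalQuantile p with hx₀
  have hΦ : stdNormalCDF x₀ = p := cdf_quantile ⟨hp0, hp1⟩
  -- substitution identities
  have hQsub : ∀ b : ℝ, (∫ u in p..stdNormalCDF b, stdNormalQuantile u)
      = ∫ x in x₀..b, x * stdNormalPDF x := by
    intro b
    rw [← hΦ, ← integral_comp_cdf stdNormalQuantile quantile_continuousOn x₀ b]
    refine intervalIntegral.integral_congr fun x _ => ?_
    rw [quantile_cdf]; ring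
  have hnormsub : ∀ b : ℝ, (∫ u in p..stdNormalCDF b, ‖stdNormalQuantile u‖)
      = ∫ x in x₀..b, stdNormalPDF x * ‖x‖ := by
    intro b
    rw [← hΦ, ← integral_comp_cdf (fun u => ‖stdNormalQuantile u‖)
      quantile_continuousOn.norm x₀ b]
    exact intervalIntegral.integral_congr fun x _ => by rw [quantile_cdf]
  have hint : Integrable (fun x : ℝ => x * stdNormalPDF x) := integrable_mul_pdf
  have hintn : Integrable (fun x : ℝ => stdNormalPDF x * ‖x‖) := by
    refine hint.norm.congr (Eventually.of_forall fun x => ?_)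
    simp [Real.norm_eq_abs, abs_mul, abs_of_pos (pdf_pos x), mul_comm]
  set I := ∫ x : ℝ, stdNormalPDF x * ‖x‖ with hI
  -- integrability of the quantile function on (p, 1]
  have hQint : IntegrableOn stdNormalQuantile (Ioc p 1) := by
    refine integrableOn_Ioc_of_intervalIntegral_norm_bounded_right
      (b := stdNormalCDF) (I := I) ?_ cdf_tendsto_atTop ?_
    · intro i
      rcases le_or_gt (stdNormalCDF i) p with h | h
      · rw [Ioc_eq_empty (not_lt.mpr h)]
        exact integrableOn_empty
      · refine (ContinuousOn.integrableOn_Icc ?_).mono_set Ioc_subset_Icc_self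
        exact quantile_continuousOn.mono fun u hu =>
          ⟨hp0.trans_le hu.1, lt_of_le_of_lt hu.2 (cdf_lt_one i)⟩
    · filter_upwards [eventually_ge_atTop x₀] with i hi
      have hpi : p ≤ stdNormalCDF i := hΦ ▸ cdf_strictMono.monotone hi
      calc (∫ u in Ioc p (stdNormalCDF i), ‖stdNormalQuantile u‖)
          = ∫ u in p..stdNormalCDF i, ‖stdNormalQuantile u‖ :=
            (intervalIntegral.integral_of_le hpi).symm
        _ = ∫ x in x₀..i, stdNormalPDF x * ‖x‖ := hnormsub i
        _ = ∫ x in Ioc x₀ i, stdNormalPDF x * ‖x‖ :=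
            intervalIntegral.integral_of_le hi
        _ ≤ I := setIntegral_le_integral hintn
            (Eventually.of_forall fun x => mul_nonneg (pdf_pos x).le (norm_nonneg x))
  -- limit of the truncated integrals of the quantile function
  have hcover : AECover (volume.restrict (Ioc p 1)) atTop
      (fun i : ℝ => Ioc p (stdNormalCDF i)) :=
    aecover_Ioc_of_Ioc tendsto_const_nhds cdf_tendsto_atTop
  have hlim1 : Tendsto (fun i : ℝ => ∫ u in p..stdNormalCDF i, stdNormalQuantile u) atTop
      (𝓝 (∫ u in p..1, stdNormalQuantile u)) := by
    have h := hcover.integral_tendsto_of_countably_generated hQint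
    rw [intervalIntegral.integral_of_le hp1.le]
    refine h.congr' ?_
    filter_upwards [eventually_ge_atTop x₀] with i hi
    have hpi : p ≤ stdNormalCDF i := hΦ ▸ cdf_strictMono.monotone hi
    rw [Measure.restrict_restrict measurableSet_Ioc,
      inter_eq_left.mpr (Ioc_subset_Ioc_right (cdf_lt_one i).le),
      intervalIntegral.integral_of_le hpi]
  -- limit of the truncated integrals of `x ↦ x f(x)`
  have hIoi : IntegrableOn (fun x : ℝ => x * stdNormalPDF x) (Ioi x₀) := hint.integrableOn
  have hlim2 : Tendsto (fun i : ℝ => ∫ x in x₀..i, x * stdNormalPDF x) atTop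
      (𝓝 (∫ x in Ioi x₀, x * stdNormalPDF x)) :=
    intervalIntegral_tendsto_integral_Ioi x₀ hIoi tendsto_id
  -- FTC on `(x₀, ∞)`
  have hderiv : ∀ x : ℝ, HasDerivAt (fun y => -stdNormalPDF y) (x * stdNormalPDF x) x := by
    intro x
    have key : HasDerivAt (fun y : ℝ => -(Real.exp (-y ^ 2 / 2) / Real.sqrt (2 * Real.pi)))
        (-(Real.exp (-x ^ 2 / 2) * (-(↑2 * x ^ 1) / 2) / Real.sqrt (2 * Real.pi))) x :=
      ((((hasDerivAt_pow 2 x).neg.div_const 2).exp).div_const _).neg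
    have heq : x * stdNormalPDF x
        = -(Real.exp (-x ^ 2 / 2) * (-(↑2 * x ^ 1) / 2) / Real.sqrt (2 * Real.pi)) := by
      unfold stdNormalPDF; ring
    rw [heq]
    exact key
  have hpdf0 : Tendsto (fun x : ℝ => -stdNormalPDF x) atTop (𝓝 0) := by
    have h1 : Tendsto (fun x : ℝ => -x ^ 2 / 2) atTop atBot := by
      apply Tendsto.atBot_div_const (by norm_num : (0:ℝ) < 2)
      exact tendsto_neg_atTop_atBot.comp (tendsto_pow_atTop two_ne_zero)
    have h3 := (Real.tendsto_exp_atBot.comp h1).div_const (Real.sqrt (2 * Real.pi))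
    simpa [stdNormalPDF] using h3.neg
  have hIoi_eq : (∫ x in Ioi x₀, x * stdNormalPDF x) = stdNormalPDF x₀ := by
    have h := integral_Ioi_of_hasDerivAt_of_tendsto' (f := fun y => -stdNormalPDF y)
      (f' := fun x => x * stdNormalPDF x) (a := x₀) (fun x _ => hderiv x) hIoi hpdf0
    simpa using h
  have hfinal : Tendsto (fun i : ℝ => ∫ u in p..stdNormalCDF i, stdNormalQuantile u) atTop
      (𝓝 (stdNormalPDF x₀)) := by
    have heq : (fun i : ℝ => ∫ u in p..stdNormalCDF i, stdNormalQuantile u)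
        = fun i : ℝ => ∫ x in x₀..i, x * stdNormalPDF x := funext hQsub
    rw [heq, ← hIoi_eq]
    exact hlim2
  have h1 : (∫ u in p..1, stdNormalQuantile u) = stdNormalPDF x₀ :=
    tendsto_nhds_unique hlim1 hfinal
  exact ⟨h1, by rw [h1]; ring⟩
end

section
/- Let μ be a probability measure on ℝ with finite first moment whose CDF F(x) = μ((−∞,x]) is continuous, let Q(p) = inf{x : p ≤ F(x)} be its quantile function, and let p ∈ (0,1). Then the tail expectation above the p-quantile equals the integral of the quantile function over the upper tail of confidence levels: ∫_ℝ z · 1_{{z > Q(p)}} dμ(z) = ∫_p^1 Q(u) du. In particular, CVaR_p = E[Z | Z > Q(p)] = (1/(1−p)) ∫_p^1 Q(u) du for a random variable Z with law μ, provided μ({z : z > Q(p)}) = 1 − p. -/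
open MeasureTheory Set Filter Topology

/-- **Tail expectation above the quantile equals the upper-tail integral of the
quantile function.** Let `μ` be a probability measure on `ℝ` with finite first
moment and continuous CDF `F`, `Q` its quantile function, and `p ∈ (0,1)`. Then
`∫_{z > Q(p)} z dμ(z) = ∫_p^1 Q(u) du`; in particular, when
`μ({z > Q(p)}) = 1 − p`, the conditional expectation `E[Z | Z > Q(p)]` equals
`(1/(1−p)) ∫_p^1 Q(u) du`, i.e. `CVaR_p`. -/
theorem tail_expectation_eq_integral_quantile
    (μ : Measure ℝ) [IsProbabilityMeasure μ] (hμ : Integrable id μ)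
    (F : ℝ → ℝ) (hF : ∀ x, F x = (μ (Set.Iic x)).toReal)
    (hFcont : Continuous F)
    (Q : ℝ → ℝ) (hQ : ∀ u ∈ Set.Ioo (0 : ℝ) 1, Q u = sInf {x : ℝ | u ≤ F x})
    (p : ℝ) (hp : p ∈ Set.Ioo (0 : ℝ) 1) :
    (∫ z in {z : ℝ | Q p < z}, z ∂μ) = ∫ u in p..1, Q u ∧
    (μ {z : ℝ | Q p < z} = ENNReal.ofReal (1 - p) →
      (μ {z : ℝ | Q p < z}).toReal⁻¹ * ∫ z in {z : ℝ | Q p < z}, z ∂μ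
        = (1 / (1 - p)) * ∫ u in p..1, Q u) := by
  obtain ⟨hp0, hp1⟩ := hp
  set Q' : ℝ → ℝ := fun u => sInf {x : ℝ | u ≤ F x} with hQ'def
  -- basic facts about F
  have hFmono : Monotone F := by
    intro a b hab
    rw [hF a, hF b]
    exact ENNReal.toReal_mono (measure_ne_top μ _)
      (measure_mono (Iic_subset_Iic.2 hab))
  have hFle1 : ∀ x, F x ≤ 1 := by
    intro x
    rw [hF x]
    have : μ (Iic x) ≤ 1 := prob_le_one
    simpa using ENNReal.toReal_mono (by norm_num) this
  have hFeq : F = fun x => (μ (Iic x)).toReal := funext hF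
  -- limits of F
  have htop : Tendsto F atTop (𝓝 1) := by
    have h1 : Tendsto (fun x => μ (Iic x)) atTop (𝓝 1) := by
      simpa using tendsto_measure_Iic_atTop μ
    have := (ENNReal.tendsto_toReal (by norm_num : (1 : ENNReal) ≠ ⊤)).comp h1
    rw [hFeq]
    simpa [Function.comp_def] using this
  have hbot : Tendsto F atBot (𝓝 0) := by
    have h0 : Tendsto (fun x => μ (Iic x)) atBot (𝓝 0) := by
      have hiter := tendsto_measure_iInter_atBot (μ := μ) (s := fun x : ℝ => Iic x)
        (fun i => (measurableSet_Iic).nullMeasurableSet) (fun a b hab => Iic_subset_Iic.2 hab)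
        ⟨0, measure_ne_top μ _⟩
      have hempty : ⋂ x : ℝ, Iic x = (∅ : Set ℝ) := by
        ext y
        simp only [mem_iInter, mem_Iic, mem_empty_iff_false, iff_false, not_forall, not_le]
        exact ⟨y - 1, by linarith⟩
      rw [hempty] at hiter
      simpa [Function.comp_def] using hiter
    have := (ENNReal.tendsto_toReal (by norm_num : (0 : ENNReal) ≠ ⊤)).comp h0
    rw [hFeq]
    simpa [Function.comp_def] using this
  have hex_lt : ∀ u : ℝ, 0 < u → ∃ y, F y < u := fun u hu =>
    (hbot.eventually (gt_mem_nhds hu)).exists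
  have hex_ge : ∀ u : ℝ, u < 1 → ∃ y, u ≤ F y := by
    intro u hu
    obtain ⟨z, hz⟩ := (htop.eventually (lt_mem_nhds hu)).exists
    exact ⟨z, hz.le⟩
  have hSne : ∀ u : ℝ, u < 1 → {x : ℝ | u ≤ F x}.Nonempty := fun u hu => hex_ge u hu
  have hSbdd : ∀ u : ℝ, 0 < u → BddBelow {x : ℝ | u ≤ F x} := by
    intro u hu
    obtain ⟨y, hy⟩ := hex_lt u hu
    refine ⟨y, fun z hz => ?_⟩
    by_contra h
    push_neg at h
    exact absurd (le_trans hz (hFmono h.le)) (not_le.2 hy)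
  -- F (Q' u) = u
  have hFQ : ∀ u ∈ Ioo (0 : ℝ) 1, F (Q' u) = u := by
    intro u hu
    have hne := hSne u hu.2
    have hbd := hSbdd u hu.1
    have h1 : u ≤ F (Q' u) := by
      have key : ∀ x ∈ Ioi (Q' u), u ≤ F x := by
        intro x hx
        obtain ⟨z, hz, hzx⟩ := exists_lt_of_csInf_lt hne hx
        exact le_trans hz (hFmono hzx.le)
      have hcont : Tendsto F (𝓝[>] (Q' u)) (𝓝 (F (Q' u))) :=
        (hFcont.tendsto _).mono_left nhdsWithin_le_nhds
      exact ge_of_tendsto hcont (eventually_nhdsWithin_of_forall key)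
    have h2 : F (Q' u) ≤ u := by
      have key : ∀ x ∈ Iio (Q' u), F x ≤ u := by
        intro x hx
        by_contra h
        push_neg at h
        exact absurd (csInf_le hbd (le_of_lt h)) (not_le.2 hx)
      have hcont : Tendsto F (𝓝[<] (Q' u)) (𝓝 (F (Q' u))) :=
        (hFcont.tendsto _).mono_left nhdsWithin_le_nhds
      exact le_of_tendsto hcont (eventually_nhdsWithin_of_forall key)
    linarith
  -- Galois connection
  have hgal : ∀ u ∈ Ioo (0 : ℝ) 1, ∀ x : ℝ, Q' u ≤ x ↔ u ≤ F x := by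
    intro u hu x
    constructor
    · intro h
      calc u = F (Q' u) := (hFQ u hu).symm
        _ ≤ F x := hFmono h
    · intro h
      exact csInf_le (hSbdd u hu.1) h
  have hQle : ∀ u ∈ Ioo (0 : ℝ) 1, ∀ v ∈ Ioo (0 : ℝ) 1, (Q' u ≤ Q' v ↔ u ≤ v) := by
    intro u hu v hv
    rw [hgal u hu, hFQ v hv]
  -- measurability of Q' restricted to (0,1)
  set g : ℝ → ℝ := fun u => if u ∈ Ioo (0 : ℝ) 1 then Q' u else 0 with hgdef
  have hgmeas : Measurable g := by
    apply measurable_of_Iic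
    intro x
    have hset : g ⁻¹' Iic x =
        (Ioo (0 : ℝ) 1 ∩ Iic (F x)) ∪ (if (0 : ℝ) ≤ x then (Ioo (0 : ℝ) 1)ᶜ else ∅) := by
      ext u
      by_cases hu : u ∈ Ioo (0 : ℝ) 1
      · have hgu : g u = Q' u := if_pos hu
        constructor
        · intro h
          rw [mem_preimage, mem_Iic, hgu] at h
          exact Or.inl ⟨hu, (hgal u hu x).1 h⟩
        · intro h
          rw [mem_preimage, mem_Iic, hgu, hgal u hu x]
          rcases h with ⟨-, h⟩ | h
          · exact h
          · exfalso
            split_ifs at h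
            · exact h hu
            · exact h
      · have hgu : g u = 0 := if_neg hu
        constructor
        · intro h
          rw [mem_preimage, mem_Iic, hgu] at h
          right
          rw [if_pos h]
          exact hu
        · intro h
          rw [mem_preimage, mem_Iic, hgu]
          rcases h with ⟨h1, -⟩ | h
          · exact absurd h1 hu
          · split_ifs at h with hx
            · exact hx
            · exact h.elim
    rw [hset]
    refine MeasurableSet.union (measurableSet_Ioo.inter measurableSet_Iic) ?_
    split_ifs
    · exact measurableSet_Ioo.compl
    · exact MeasurableSet.empty
  set m : Measure ℝ := volume.restrict (Ioo (0 : ℝ) 1) with hmdef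
  have haem : AEMeasurable Q' m :=
    ⟨g, hgmeas, by
      filter_upwards [ae_restrict_mem measurableSet_Ioo] with u hu
      exact (if_pos hu).symm⟩
  have hmuniv : m univ = 1 := by
    simp [hmdef, Real.volume_Ioo]
  haveI : IsFiniteMeasure m := ⟨by rw [hmuniv]; norm_num⟩
  haveI hfinmap : IsFiniteMeasure (Measure.map Q' m) := by
    constructor
    rw [Measure.map_apply_of_aemeasurable haem MeasurableSet.univ]
    simp only [preimage_univ]
    rw [hmuniv]; norm_num
  -- pushforward identity
  have hmap : Measure.map Q' m = μ := by
    refine Measure.ext_of_Iic (Measure.map Q' m) μ ?_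
    intro x
    rw [Measure.map_apply_of_aemeasurable haem measurableSet_Iic, hmdef,
      Measure.restrict_apply' measurableSet_Ioo]
    have hpre : Q' ⁻¹' Iic x ∩ Ioo (0 : ℝ) 1 = Iic (F x) ∩ Ioo (0 : ℝ) 1 := by
      ext u
      constructor
      · rintro ⟨h1, h2⟩
        exact ⟨(hgal u h2 x).1 h1, h2⟩
      · rintro ⟨h1, h2⟩
        exact ⟨(hgal u h2 x).2 h1, h2⟩
    rw [hpre]
    have hvol : volume (Iic (F x) ∩ Ioo (0 : ℝ) 1) = ENNReal.ofReal (F x) := by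
      apply le_antisymm
      · have hsub : Iic (F x) ∩ Ioo (0 : ℝ) 1 ⊆ Ioc 0 (F x) :=
          fun u ⟨h1, h2⟩ => ⟨h2.1, h1⟩
        calc volume (Iic (F x) ∩ Ioo (0 : ℝ) 1) ≤ volume (Ioc 0 (F x)) :=
              measure_mono hsub
          _ = ENNReal.ofReal (F x) := by rw [Real.volume_Ioc]; norm_num
      · have hsub : Ioo 0 (F x) ⊆ Iic (F x) ∩ Ioo (0 : ℝ) 1 := by
          intro u ⟨h1, h2⟩
          exact ⟨h2.le, h1, lt_of_lt_of_le h2 (hFle1 x)⟩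
        calc ENNReal.ofReal (F x) = volume (Ioo 0 (F x)) := by
              rw [Real.volume_Ioo]; norm_num
          _ ≤ volume (Iic (F x) ∩ Ioo (0 : ℝ) 1) := measure_mono hsub
    rw [hvol, hF x, ENNReal.ofReal_toReal (measure_ne_top μ _)]
  -- main computation
  have hpmem : p ∈ Ioo (0 : ℝ) 1 := ⟨hp0, hp1⟩
  have hQp : Q p = Q' p := hQ p hpmem
  have hsmeas : MeasurableSet {z : ℝ | Q p < z} := measurableSet_Ioi
  have hmain : (∫ z in {z : ℝ | Q p < z}, z ∂μ) = ∫ u in p..1, Q u := by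
    calc (∫ z in {z : ℝ | Q p < z}, z ∂μ)
        = ∫ z in {z : ℝ | Q p < z}, id z ∂(Measure.map Q' m) := by rw [hmap]; rfl
      _ = ∫ u in Q' ⁻¹' {z : ℝ | Q p < z}, Q' u ∂m :=
          setIntegral_map hsmeas aestronglyMeasurable_id haem
      _ = ∫ u in Ioo p 1, Q' u := by
          rw [hmdef, Measure.restrict_restrict' measurableSet_Ioo]
          congr 1
          have : Q' ⁻¹' {z : ℝ | Q p < z} ∩ Ioo (0 : ℝ) 1 = Ioo p 1 := by
            ext u
            constructor
            · rintro ⟨h1, h2⟩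
              have : Q' p < Q' u := by rw [hQp] at h1; exact h1
              have hpu : p < u := by
                by_contra h
                push_neg at h
                exact absurd ((hQle u h2 p hpmem).2 h) (not_le.2 this)
              exact ⟨hpu, h2.2⟩
            · rintro ⟨h1, h2⟩
              have hu : u ∈ Ioo (0 : ℝ) 1 := ⟨lt_trans hp0 h1, h2⟩
              have : Q' p < Q' u := by
                by_contra h
                push_neg at h
                exact absurd ((hQle u hu p hpmem).1 h) (not_le.2 h1)
              refine ⟨?_, hu⟩
              simpa [hQp] using this
          rw [this]
      _ = ∫ u in Ioo p 1, Q u := by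
          apply setIntegral_congr_ae measurableSet_Ioo
          filter_upwards with u hu
          exact (hQ u ⟨lt_trans hp0 hu.1, hu.2⟩).symm
      _ = ∫ u in p..1, Q u := by
          rw [intervalIntegral.integral_of_le hp1.le, integral_Ioc_eq_integral_Ioo]
  refine ⟨hmain, fun h => ?_⟩
  rw [h, ENNReal.toReal_ofReal (by linarith), hmain, inv_eq_one_div]
end
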